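/- Let χ = (P₁,P₂,P₃,0) be a Pseudo Type-n vector field in ℝ⁴, i.e., P₁, P₂, P₃ ∈ ℝ[x₁,x₂,x₃,x₄] are homogeneous polynomials of degree n and P₄ = 0. Then χ is a vector field on S²×S¹ if and only if there exist polynomials A, B, C ∈ ℝ[x₁,x₂,x₃,x₄] such that P₁ = A·x₂ + B·x₃, P₂ = −A·x₁ + C·x₃ and P₃ = −B·x₁ − C·x₂. -/

import Mathlib

/-!
With `S = x₁P₁ + x₂P₂ + x₃P₃` and `r² = x₁² + x₂² + x₃²` one has `χG_b = 4(r² - b²)·S`, so the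
condition on `P` makes `χG_b` vanish. Conversely, substituting `x ↦ t·x` turns `(r² - b²)·S` into a
polynomial in `t` supported in degrees `deg S` and `deg S + 2`, whereas `G_b` becomes one of degree
`4` with nonzero constant term `b⁴ - 1`. Degree and trailing degree are additive, so `G_b` divides
`(r² - b²)·S` only if `S = 0`, and the solutions of `x₁P₁ + x₂P₂ + x₃P₃ = 0` are the Koszul
syzygies, found by successively setting variables to zero.
-/

open MvPolynomial

/-- The action of the polynomial vector field `χ = (P 0, P 1, P 2, P 3)` on a polynomial:
`χf = Σᵢ Pᵢ ∂f/∂xᵢ`. -/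
noncomputable def chi (P : Fin 4 → MvPolynomial (Fin 4) ℝ)
    (f : MvPolynomial (Fin 4) ℝ) : MvPolynomial (Fin 4) ℝ :=
  ∑ i, P i * pderiv i f

/-- `G_b = (x₁² + x₂² + x₃² - b²)² + x₄² - 1`, whose zero set is `S² × S¹`. -/
noncomputable def Gb (b : ℝ) : MvPolynomial (Fin 4) ℝ :=
  (X 0 ^ 2 + X 1 ^ 2 + X 2 ^ 2 - C (b ^ 2)) ^ 2 + X 3 ^ 2 - 1

theorem Polynomial.natDegree_sub_natTrailingDegree_le_of_dvd {R : Type*} [Semiring R]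
    [NoZeroDivisors R] {p q : Polynomial R} (h : q ∣ p) (hp : p ≠ 0) :
    q.natDegree - q.natTrailingDegree ≤ p.natDegree - p.natTrailingDegree := by
  obtain ⟨k, rfl⟩ := h
  have hq : q ≠ 0 := left_ne_zero_of_mul hp
  have hk : k ≠ 0 := right_ne_zero_of_mul hp
  rw [natDegree_mul hq hk, natTrailingDegree_mul hq hk]
  have := natTrailingDegree_le_natDegree k
  omega

namespace MvPolynomial

section Substitution

variable {σ R : Type*} [CommRing R] [DecidableEq σ]

noncomputable def setVarZero (i : σ) : MvPolynomial σ R →ₐ[R] MvPolynomial σ R :=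
  aeval (Function.update X i 0)

@[simp]
theorem setVarZero_X_self (i : σ) : setVarZero i (X i : MvPolynomial σ R) = 0 := by
  simp [setVarZero]

@[simp]
theorem setVarZero_X_of_ne {i j : σ} (h : j ≠ i) :
    setVarZero i (X j : MvPolynomial σ R) = X j := by
  simp [setVarZero, Function.update_of_ne h]

theorem exists_eq_X_mul_add_setVarZero (i : σ) (p : MvPolynomial σ R) :
    ∃ q, p = X i * q + setVarZero i p := by
  induction p using MvPolynomial.induction_on with
  | C a => exact ⟨0, by simp [setVarZero]⟩
  | add p r hp hr =>
    obtain ⟨q, hq⟩ := hp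
    obtain ⟨s, hs⟩ := hr
    exact ⟨q + s, by rw [map_add]; linear_combination hq + hs⟩
  | mul_X p j hp =>
    obtain ⟨q, hq⟩ := hp
    by_cases hji : j = i
    · subst hji
      exact ⟨q * X j + setVarZero j p, by
        rw [map_mul, setVarZero_X_self, mul_zero]; linear_combination X j * hq⟩
    · exact ⟨q * X j, by
        rw [map_mul, setVarZero_X_of_ne hji]; linear_combination X j * hq⟩

variable [IsDomain R]

theorem exists_of_X_mul_add_X_mul_eq_zero {i j : σ} (hij : i ≠ j) {p q : MvPolynomial σ R}
    (h : X i * p + X j * q = 0) : ∃ E, p = X j * E ∧ q = -(X i * E) := by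
  obtain ⟨E, hE⟩ := exists_eq_X_mul_add_setVarZero i q
  have hq : setVarZero i q = 0 := by
    simpa [hij.symm, X_ne_zero] using congrArg (setVarZero i) h
  rw [hq, add_zero] at hE
  refine ⟨-E, mul_left_cancel₀ (X_ne_zero i) ?_, by rw [hE]; ring⟩
  linear_combination h - X j * hE

theorem exists_of_X_mul_add_X_mul_add_X_mul_eq_zero {i j k : σ} (hij : i ≠ j) (hik : i ≠ k)
    (hjk : j ≠ k) {p q r : MvPolynomial σ R} (h : X i * p + X j * q + X k * r = 0) :
    ∃ A B C' : MvPolynomial σ R,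
      p = A * X j + B * X k ∧ q = -A * X i + C' * X k ∧ r = -B * X i - C' * X j := by
  obtain ⟨q', hq'⟩ := exists_eq_X_mul_add_setVarZero i q
  obtain ⟨r', hr'⟩ := exists_eq_X_mul_add_setVarZero i r
  have hsub : X j * setVarZero i q + X k * setVarZero i r = 0 := by
    simpa [hij.symm, hik.symm] using congrArg (setVarZero i) h
  obtain ⟨E, hqE, hrE⟩ := exists_of_X_mul_add_X_mul_eq_zero hjk hsub
  have hp : p = -(X j * q') - X k * r' := mul_left_cancel₀ (X_ne_zero i) <| by
    linear_combination h - X j * hq' - X k * hr' - X j * hqE - X k * hrE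
  exact ⟨-q', -r', E, by rw [hp]; ring, by linear_combination hq' + hqE,
    by linear_combination hr' + hrE⟩

end Substitution

section Scaling

variable {σ R : Type*} [CommSemiring R]

noncomputable def scaleVars : MvPolynomial σ R →ₐ[R] Polynomial (MvPolynomial σ R) :=
  aeval fun i => Polynomial.C (X i) * Polynomial.X

@[simp]
theorem scaleVars_X (i : σ) :
    scaleVars (X i : MvPolynomial σ R) = Polynomial.C (X i) * Polynomial.X :=
  aeval_X _ i

theorem IsHomogeneous.scaleVars_eq {p : MvPolynomial σ R} {n : ℕ} (hp : p.IsHomogeneous n) :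
    scaleVars p = Polynomial.C p * Polynomial.X ^ n := by
  conv_lhs => rw [p.as_sum]
  conv_rhs => rw [p.as_sum]
  rw [map_sum, map_sum, Finset.sum_mul]
  refine Finset.sum_congr rfl fun d hd => ?_
  rw [monomial_eq, map_mul, scaleVars, aeval_C, Finsupp.prod, map_prod]
  simp only [map_pow, aeval_X, mul_pow, Finset.prod_mul_distrib, Finset.prod_pow_eq_pow_sum,
    ← hp.degree_eq_sum_deg_support hd, map_mul, map_prod, Polynomial.algebraMap_apply,
    algebraMap_eq, mul_assoc]

@[simp]
theorem scaleVars_C (r : R) : scaleVars (C r : MvPolynomial σ R) = Polynomial.C (C r) := by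
  simp [(isHomogeneous_C σ r).scaleVars_eq]

end Scaling

end MvPolynomial

noncomputable def rSq : MvPolynomial (Fin 4) ℝ := X 0 ^ 2 + X 1 ^ 2 + X 2 ^ 2

theorem rSq_ne_zero : rSq ≠ 0 := fun h => by
  have := congrArg (eval fun _ => (1 : ℝ)) h
  norm_num [rSq] at this

theorem isHomogeneous_rSq : rSq.IsHomogeneous 2 :=
  ((isHomogeneous_X_pow 0 2).add (isHomogeneous_X_pow 1 2)).add (isHomogeneous_X_pow 2 2)

theorem chi_Gb (b : ℝ) {P : Fin 4 → MvPolynomial (Fin 4) ℝ} (hP : P 3 = 0) :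
    chi P (Gb b) = 4 * (rSq - C (b ^ 2)) * (X 0 * P 0 + X 1 * P 1 + X 2 * P 2) := by
  simp only [chi, Gb, rSq, Fin.sum_univ_four, hP, C_pow, map_sub, map_add, Derivation.leibniz_pow,
    Nat.add_one_sub_one, pow_one, pderiv_X, Pi.single_apply, smul_eq_mul, mul_ite, mul_one,
    mul_zero, smul_ite, nsmul_eq_mul, Nat.cast_ofNat, derivation_C, sub_zero,
    Derivation.map_one_eq_zero, ↓reduceIte, one_ne_zero, add_zero, Fin.reduceEq, zero_ne_one,
    zero_add, zero_mul]
  ring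

theorem scaleVars_Gb (b : ℝ) :
    scaleVars (Gb b) = Polynomial.C (rSq ^ 2) * Polynomial.X ^ 4
      + Polynomial.C (X 3 ^ 2 - C (2 * b ^ 2) * rSq) * Polynomial.X ^ 2
      + Polynomial.C (C (b ^ 4 - 1)) := by
  simp only [Gb, rSq, map_sub, map_add, map_pow, map_one, map_mul, map_ofNat, scaleVars_X,
    scaleVars_C]
  ring

theorem natDegree_scaleVars_Gb (b : ℝ) : (scaleVars (Gb b)).natDegree = 4 := by
  rw [scaleVars_Gb]
  compute_degree!
  exact rSq_ne_zero

theorem natTrailingDegree_scaleVars_Gb {b : ℝ} (hb : b ^ 4 ≠ 1) :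
    (scaleVars (Gb b)).natTrailingDegree = 0 := by
  refine Polynomial.natTrailingDegree_eq_zero.mpr (Or.inr ?_)
  simp only [scaleVars_Gb, Polynomial.coeff_add, Polynomial.coeff_C_mul_X_pow,
    Polynomial.coeff_C_zero, OfNat.zero_ne_ofNat, if_false, zero_add, ne_eq, C_eq_zero,
    sub_eq_zero]
  exact hb

theorem eq_zero_of_Gb_dvd {b : ℝ} (hb : b ^ 4 ≠ 1) {S : MvPolynomial (Fin 4) ℝ} {d : ℕ}
    (hS : S.IsHomogeneous d) (h : Gb b ∣ (rSq - C (b ^ 2)) * S) : S = 0 := by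
  by_contra hS0
  set L := scaleVars ((rSq - C (b ^ 2)) * S)
  have hL : L = Polynomial.C (rSq * S) * Polynomial.X ^ (d + 2) -
      Polynomial.C (C (b ^ 2) * S) * Polynomial.X ^ d := by
    simp only [L, map_mul, map_sub, isHomogeneous_rSq.scaleVars_eq, hS.scaleVars_eq, scaleVars_C]
    ring
  have hcoeff : ∀ m, L.coeff m =
      (if m = d + 2 then rSq * S else 0) - if m = d then C (b ^ 2) * S else 0 := fun m => by
    rw [hL, Polynomial.coeff_sub, Polynomial.coeff_C_mul_X_pow, Polynomial.coeff_C_mul_X_pow]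
  have hL0 : L ≠ 0 := fun h0 => by
    simpa [h0, rSq_ne_zero, hS0] using hcoeff (d + 2)
  have hdeg : L.natDegree ≤ d + 2 :=
    Polynomial.natDegree_le_iff_coeff_eq_zero.mpr fun m hm => by
      rw [hcoeff, if_neg (by omega), if_neg (by omega), sub_zero]
  have htrail : d ≤ L.natTrailingDegree :=
    Polynomial.le_natTrailingDegree hL0 fun m hm => by
      rw [hcoeff, if_neg (by omega), if_neg (by omega), sub_zero]
  have hspread := Polynomial.natDegree_sub_natTrailingDegree_le_of_dvd
    (q := scaleVars (Gb b)) (p := L) (map_dvd scaleVars h) hL0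
  rw [natDegree_scaleVars_Gb, natTrailingDegree_scaleVars_Gb hb] at hspread
  omega

theorem stmt_17 (b : ℝ) (hb : 1 < b) (n : ℕ) (P : Fin 4 → MvPolynomial (Fin 4) ℝ)
    (hhom : (P 0).IsHomogeneous n ∧ (P 1).IsHomogeneous n ∧ (P 2).IsHomogeneous n)
    (hP4 : P 3 = 0) :
    (∃ K : MvPolynomial (Fin 4) ℝ, chi P (Gb b) = K * Gb b) ↔
      ∃ A B C' : MvPolynomial (Fin 4) ℝ,
        P 0 = A * X 1 + B * X 2 ∧
        P 1 = -A * X 0 + C' * X 2 ∧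
        P 2 = -B * X 0 - C' * X 1 := by
  rw [chi_Gb b hP4]
  constructor
  · rintro ⟨K, hK⟩
    obtain ⟨h0, h1, h2⟩ := hhom
    have hS : (X 0 * P 0 + X 1 * P 1 + X 2 * P 2).IsHomogeneous (1 + n) :=
      (((isHomogeneous_X ℝ 0).mul h0).add ((isHomogeneous_X ℝ 1).mul h1)).add
        ((isHomogeneous_X ℝ 2).mul h2)
    have hb4 : b ^ 4 ≠ 1 := (one_lt_pow₀ hb four_ne_zero).ne'
    have h4S := eq_zero_of_Gb_dvd hb4 (hS.C_mul 4) ⟨K, by rw [map_ofNat]; linear_combination hK⟩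
    refine exists_of_X_mul_add_X_mul_add_X_mul_eq_zero (by decide) (by decide) (by decide) ?_
    simpa using h4S
  · rintro ⟨A, B, C', hA, hB, hC⟩
    exact ⟨0, by rw [hA, hB, hC]; ring⟩
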